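/- Let Y be a real inner product space and θ ∈ [0,1]. For all u, v ∈ Y one has ((1−θ)/4)(‖u‖_Y² + ‖v‖_Y²) ≤ ‖(u,v)‖_{G(θ)}² ≤ ((1+θ)/4)(‖u‖_Y² + ‖v‖_Y²); in particular ‖(u,v)‖_{G(θ)}² ≥ 0, and consequently for any y_{n-1}, y_n, y_{n+1} ∈ Y, ⟨α_2 y_{n+1} + α_1 y_n + α_0 y_{n-1}, β_2^{(n)} y_{n+1} + β_1^{(n)} y_n + β_0^{(n)} y_{n-1}⟩_Y ≥ ‖(y_{n+1}, y_n)‖_{G(θ)}² − ‖(y_n, y_{n-1})‖_{G(θ)}² (G-stability of the DLN method). -/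

import Mathlib

/-!
Expanding both sides in the Gram entries of `y₀, y₁, y₂` shows that the DLN inner product equals
`‖(y₂, y₁)‖²_G − ‖(y₁, y₀)‖²_G + θ(1 − θ²) / (2(1 + εθ)²) · ‖(1 − ε)/2 · y₂ − y₁ + (1 + ε)/2 · y₀‖²`.
For positive step sizes `|ε| < 1`, so `1 + εθ > 0`, and for `θ ∈ [0, 1]` the extra term is
nonnegative.
-/

open RealInnerProductSpace

section DLN

variable {Y : Type*} [NormedAddCommGroup Y]

noncomputable def gNormSq (θ : ℝ) (u v : Y) : ℝ :=
  (1/4) * (1 + θ) * ‖u‖ ^ 2 + (1/4) * (1 - θ) * ‖v‖ ^ 2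

theorem gNormSq_bounds {θ : ℝ} (hθ : θ ∈ Set.Icc (0 : ℝ) 1) (u v : Y) :
    (1 - θ) / 4 * (‖u‖ ^ 2 + ‖v‖ ^ 2) ≤ gNormSq θ u v ∧
      gNormSq θ u v ≤ (1 + θ) / 4 * (‖u‖ ^ 2 + ‖v‖ ^ 2) ∧ 0 ≤ gNormSq θ u v := by
  obtain ⟨hθ0, hθ1⟩ := hθ
  have hu := sq_nonneg ‖u‖
  have hv := sq_nonneg ‖v‖
  unfold gNormSq
  refine ⟨by nlinarith, by nlinarith, by nlinarith⟩

variable [InnerProductSpace ℝ Y]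

theorem inner_smul_add_smul_add_smul (a b c a' b' c' : ℝ) (x y z : Y) :
    ⟪a • x + b • y + c • z, a' • x + b' • y + c' • z⟫
      = a * a' * ‖x‖ ^ 2 + b * b' * ‖y‖ ^ 2 + c * c' * ‖z‖ ^ 2
        + (a * b' + b * a') * ⟪x, y⟫ + (a * c' + c * a') * ⟪x, z⟫
        + (b * c' + c * b') * ⟪y, z⟫ := by
  simp only [inner_add_left, inner_add_right, real_inner_smul_left, real_inner_smul_right,
    real_inner_self_eq_norm_sq, real_inner_comm y x, real_inner_comm z x, real_inner_comm z y]
  ring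

theorem inner_dln_eq_gNormSq_sub_add {θ ε : ℝ} (h : 1 + ε * θ ≠ 0) (y0 y1 y2 : Y) :
    ⟪((θ + 1) / 2) • y2 + (-θ) • y1 + ((θ - 1) / 2) • y0,
      ((1/4) * (1 + (1 - θ^2)/(1 + ε*θ)^2 + ε^2*θ*(1 - θ^2)/(1 + ε*θ)^2 + θ)) • y2 +
        ((1/2) * (1 - (1 - θ^2)/(1 + ε*θ)^2)) • y1 +
        ((1/4) * (1 + (1 - θ^2)/(1 + ε*θ)^2 - ε^2*θ*(1 - θ^2)/(1 + ε*θ)^2 - θ)) • y0⟫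
      = gNormSq θ y2 y1 - gNormSq θ y1 y0 + θ * (1 - θ ^ 2) / (2 * (1 + ε * θ) ^ 2) *
          ‖((1 - ε) / 2) • y2 + (-1 : ℝ) • y1 + ((1 + ε) / 2) • y0‖ ^ 2 := by
  rw [← real_inner_self_eq_norm_sq, inner_smul_add_smul_add_smul,
    inner_smul_add_smul_add_smul]
  unfold gNormSq
  generalize ‖y2‖ ^ 2 = A, ‖y1‖ ^ 2 = B, ‖y0‖ ^ 2 = C, ⟪y2, y1⟫ = P, ⟪y2, y0⟫ = Q,
    ⟪y1, y0⟫ = R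
  have : 1 + θ * ε ≠ 0 := by rwa [mul_comm]
  field_simp
  ring

end DLN

theorem abs_sub_div_add_lt_one {a b : ℝ} (ha : 0 < a) (hb : 0 < b) :
    |(a - b) / (a + b)| < 1 := by
  rw [abs_div, abs_of_pos (by positivity : 0 < a + b), div_lt_one (by positivity)]
  exact abs_sub_lt_iff.mpr ⟨by linarith, by linarith⟩

theorem one_add_mul_pos_of_abs_lt_one {ε θ : ℝ} (hε : |ε| < 1) (hθ : θ ∈ Set.Icc (0 : ℝ) 1) :
    0 < 1 + ε * θ := by
  obtain ⟨hθ0, hθ1⟩ := hθ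
  nlinarith [mul_le_mul_of_nonneg_right (neg_abs_le ε) hθ0,
    mul_le_mul_of_nonneg_left hθ1 (abs_nonneg ε)]

/-- Bounds for the `G(θ)`-norm and G-stability of the DLN method. -/
theorem dln_g_norm_bounds_and_g_stability
    (Y : Type*) [NormedAddCommGroup Y] [InnerProductSpace ℝ Y]
    (θ : ℝ) (hθ : θ ∈ Set.Icc (0:ℝ) 1)
    (kn kn1 : ℝ) (hkn : 0 < kn) (hkn1 : 0 < kn1) :
    let ε : ℝ := (kn - kn1) / (kn + kn1)
    let α2 : ℝ := (θ + 1) / 2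
    let α1 : ℝ := -θ
    let α0 : ℝ := (θ - 1) / 2
    let β2 : ℝ := (1/4) * (1 + (1 - θ^2)/(1 + ε*θ)^2 + ε^2*θ*(1 - θ^2)/(1 + ε*θ)^2 + θ)
    let β1 : ℝ := (1/2) * (1 - (1 - θ^2)/(1 + ε*θ)^2)
    let β0 : ℝ := (1/4) * (1 + (1 - θ^2)/(1 + ε*θ)^2 - ε^2*θ*(1 - θ^2)/(1 + ε*θ)^2 - θ)
    let Gnorm2 : Y → Y → ℝ := fun u v => (1/4)*(1 + θ)*‖u‖^2 + (1/4)*(1 - θ)*‖v‖^2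
    (∀ u v : Y,
      (1 - θ)/4 * (‖u‖^2 + ‖v‖^2) ≤ Gnorm2 u v ∧
      Gnorm2 u v ≤ (1 + θ)/4 * (‖u‖^2 + ‖v‖^2) ∧
      0 ≤ Gnorm2 u v) ∧
    (∀ y0 y1 y2 : Y,
      ⟪α2 • y2 + α1 • y1 + α0 • y0, β2 • y2 + β1 • y1 + β0 • y0⟫
        ≥ Gnorm2 y2 y1 - Gnorm2 y1 y0) := by
  intro ε α2 α1 α0 β2 β1 β0 Gnorm2
  refine ⟨gNormSq_bounds hθ, fun y0 y1 y2 => ?_⟩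
  have hd : 0 < 1 + ε * θ :=
    one_add_mul_pos_of_abs_lt_one (abs_sub_div_add_lt_one hkn hkn1) hθ
  have hcoef : 0 ≤ θ * (1 - θ ^ 2) / (2 * (1 + ε * θ) ^ 2) := by
    obtain ⟨hθ0, hθ1⟩ := hθ
    have : 0 ≤ 1 - θ ^ 2 := by nlinarith
    positivity
  show _ ≥ gNormSq θ y2 y1 - gNormSq θ y1 y0
  rw [inner_dln_eq_gNormSq_sub_add hd.ne']
  exact le_add_of_nonneg_right (mul_nonneg hcoef (sq_nonneg _))
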